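/- arXiv:1305.2412 — 2 statements merged into one kernel-verified Lean document; each statement's English description precedes it below -/
import Mathlib

section
/- Let n ≥ 0 and t ≥ n be real numbers, let σ ∈ [0, 3/2], let s ∈ [0,1], and set q = σ/(eᵗ cosh t) = 2σ/(e^{2t}+1). Then the two eigenvalues of the interpolated metric relative to the hyperbolic metric satisfy |((1−s) + s(1+q)²) − 1| ≤ 12 e^{−2n} and |((1−s) + s(1−q)²) − 1| ≤ 12 e^{−2n}, and their product satisfies |((1−s) + s(1+q)²)·((1−s) + s(1−q)²) − 1| ≤ 54 e^{−4n}. (This is the computational core of the statement that the identity map from (S×[n,n+1], g) to (S×[n,n+1], η = (1−s)g + s h) is (1 + O(e^{−2n}))-bilipschitz with Jacobian determinant 1 + O(e^{−4n}).) -/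
set_option maxHeartbeats 1000000 in
/-- Computational core of the bilipschitz/Jacobian estimate for the interpolated metric
`η = (1−s)g + s·h`: with `q = σ/(eᵗ cosh t)`, `σ ∈ [0,3/2]`, `s ∈ [0,1]`, `0 ≤ n ≤ t`, the
eigenvalues `(1−s) + s(1±q)²` of `η` relative to `g` are within `12 e^{−2n}` of `1`, and
their product (the Jacobian determinant) is within `54 e^{−4n}` of `1`. -/
theorem interpolated_metric_eigenvalue_estimates
    (n t σ s q : ℝ) (hn : 0 ≤ n) (ht : n ≤ t)
    (hσ : σ ∈ Set.Icc (0 : ℝ) (3 / 2)) (hs : s ∈ Set.Icc (0 : ℝ) 1)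
    (hq : q = σ / (Real.exp t * Real.cosh t)) :
    |((1 - s) + s * (1 + q) ^ 2) - 1| ≤ 12 * Real.exp (-2 * n) ∧
    |((1 - s) + s * (1 - q) ^ 2) - 1| ≤ 12 * Real.exp (-2 * n) ∧
    |((1 - s) + s * (1 + q) ^ 2) * ((1 - s) + s * (1 - q) ^ 2) - 1|
      ≤ 54 * Real.exp (-4 * n) := by
  obtain ⟨hσ0, hσ2⟩ := hσ
  obtain ⟨hs0, hs1⟩ := hs
  have h1 : Real.exp t * Real.exp (-t) = 1 := by rw [← Real.exp_add]; simp
  have hc : Real.exp t * Real.cosh t = (Real.exp (2 * t) + 1) / 2 := by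
    rw [Real.cosh_eq, show (2 : ℝ) * t = t + t by ring, Real.exp_add]
    field_simp
    nlinarith [h1]
  have hE2 : (0:ℝ) < Real.exp (2 * t) := Real.exp_pos _
  have hden : 0 < Real.exp t * Real.cosh t := by rw [hc]; linarith
  have hq0 : 0 ≤ q := by rw [hq]; exact div_nonneg hσ0 hden.le
  have hkey : q * (Real.exp (2 * t) + 1) = 2 * σ := by
    rw [hq, hc]; field_simp
  have hinv : Real.exp (2 * t) * Real.exp (-(2 * t)) = 1 := by
    rw [← Real.exp_add]; simp
  have he1 : (1:ℝ) ≤ Real.exp (2 * t) := Real.one_le_exp (by linarith)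
  have hq32 : q ≤ 3 / 2 := by nlinarith [mul_nonneg hq0 (by linarith : (0:ℝ) ≤ Real.exp (2 * t) - 1)]
  have hqt : q ≤ 3 * Real.exp (-(2 * t)) := by
    nlinarith [mul_pos hE2 (Real.exp_pos (-(2 * t))), mul_nonneg hq0 hE2.le]
  have hmono : Real.exp (-(2 * t)) ≤ Real.exp (-2 * n) := by
    apply Real.exp_le_exp.2; linarith
  have hqn : q ≤ 3 * Real.exp (-2 * n) := by linarith
  set E := Real.exp (-2 * n) with hEdef
  have hE : 0 < E := Real.exp_pos _
  have hE4 : Real.exp (-4 * n) = E * E := by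
    rw [hEdef, ← Real.exp_add]; ring_nf
  have hq2 : q ^ 2 ≤ 9 * (E * E) := by nlinarith
  refine ⟨?_, ?_, ?_⟩
  · rw [abs_le]; constructor <;> nlinarith [sq_nonneg q, mul_nonneg hs0 hq0]
  · rw [abs_le]; constructor <;>
      nlinarith [sq_nonneg q, mul_nonneg hs0 hq0, mul_nonneg (mul_nonneg hs0 hq0) hq0]
  · rw [hE4, abs_le]
    have hexp : ((1 - s) + s * (1 + q) ^ 2) * ((1 - s) + s * (1 - q) ^ 2) - 1
        = 2 * s * q ^ 2 - 4 * s ^ 2 * q ^ 2 + s ^ 2 * q ^ 4 := by ring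
    rw [hexp]
    have hqq : q ^ 2 ≤ 9 / 4 := by nlinarith
    have hq4 : q ^ 4 ≤ 9 / 4 * q ^ 2 := by nlinarith [sq_nonneg q, sq_nonneg (q^2)]
    have hs2 : s ^ 2 ≤ 1 := by nlinarith
    have h2 : s ^ 2 * q ^ 4 ≤ q ^ 4 := by nlinarith [sq_nonneg (q^2), sq_nonneg s]
    have h3 : s ^ 2 * q ^ 2 ≤ q ^ 2 := by nlinarith [sq_nonneg q]
    have h4 : s * q ^ 2 ≤ q ^ 2 := by nlinarith [sq_nonneg q]
    have h5 : 0 ≤ s ^ 2 * q ^ 2 := by positivity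
    have h6 : 0 ≤ s * q ^ 2 := by positivity
    have h7 : 0 ≤ s ^ 2 * q ^ 4 := by positivity
    constructor <;> nlinarith
end

section
/- Let z₀ ∈ ℂ and let v₀, v₁, v₂ ∈ ℂ with v₁ ≠ 0. Then there exist a, b, c, d ∈ ℂ with ad − bc = 1 and cz₀ + d ≠ 0 such that the Möbius transformation M(w) = (aw+b)/(cw+d) satisfies M(z₀) = v₀, M'(z₀) = v₁, and M''(z₀) = v₂. Moreover M is unique as a function: any two Möbius transformations with these value, first-derivative and second-derivative data at z₀ agree on a neighborhood of z₀. In particular, every holomorphic φ with φ'(z₀) ≠ 0 has a unique osculating Möbius transformation M_{φ(z₀)}, the Möbius transformation with the same 2-jet as φ at z₀. -/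
/-!
For `ad − bc ≠ 0` and `q = c z₀ + d`, a Möbius map satisfies
`M w − M z₀ = (ad − bc)(w − z₀) / (q (c w + d))`, while `M' z₀ = (ad − bc) / q²` and
`M'' z₀ = −2c (ad − bc) / q³`. Eliminating the coefficients, near `z₀` every Möbius map equals
`M z₀ + M' z₀ (w − z₀) / (1 − M'' z₀ / (2 M' z₀) · (w − z₀))`, so it is determined by its 2-jet.
Conversely, a square root `q` of `1 / v₁` and `c = −v₂ q³ / 2` give a Möbius map of determinant 1
with the 2-jet `(v₀, v₁, v₂)`.
-/

open Filter Topology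

noncomputable def moebiusMap (a b c d w : ℂ) : ℂ := (a * w + b) / (c * w + d)

section

variable (a b c d : ℂ)

theorem eventually_linear_ne_zero {z : ℂ} (hz : c * z + d ≠ 0) :
    ∀ᶠ w in 𝓝 z, c * w + d ≠ 0 :=
  (by fun_prop : Continuous fun w => c * w + d).continuousAt.eventually_ne hz

theorem hasDerivAt_moebiusMap {w : ℂ} (hw : c * w + d ≠ 0) :
    HasDerivAt (moebiusMap a b c d) ((a * d - b * c) / (c * w + d) ^ 2) w := by
  have hnum : HasDerivAt (fun w => a * w + b) a w := by
    simpa using ((hasDerivAt_id w).const_mul a).add_const b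
  have hden : HasDerivAt (fun w => c * w + d) c w := by
    simpa using ((hasDerivAt_id w).const_mul c).add_const d
  exact (hnum.div hden hw).congr_deriv (by ring)

theorem deriv_moebiusMap {z : ℂ} (hz : c * z + d ≠ 0) :
    deriv (moebiusMap a b c d) z = (a * d - b * c) / (c * z + d) ^ 2 :=
  (hasDerivAt_moebiusMap a b c d hz).deriv

theorem deriv_deriv_moebiusMap {z : ℂ} (hz : c * z + d ≠ 0) :
    deriv (deriv (moebiusMap a b c d)) z = -2 * c * (a * d - b * c) / (c * z + d) ^ 3 := by
  have hderiv : deriv (moebiusMap a b c d) =ᶠ[𝓝 z] fun w => (a * d - b * c) / (c * w + d) ^ 2 := by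
    filter_upwards [eventually_linear_ne_zero c d hz] with w hw
    exact deriv_moebiusMap a b c d hw
  have hsq : HasDerivAt (fun w => (c * w + d) ^ 2) (2 * (c * z + d) * c) z := by
    simpa [mul_comm] using (((hasDerivAt_id z).const_mul c).add_const d).fun_pow 2
  rw [hderiv.deriv_eq, ((hasDerivAt_const z _).fun_div hsq (pow_ne_zero 2 hz)).deriv]
  field_simp
  ring

theorem moebiusMap_sub_moebiusMap {z w : ℂ} (hz : c * z + d ≠ 0) (hw : c * w + d ≠ 0) :
    moebiusMap a b c d w - moebiusMap a b c d z =
      (a * d - b * c) * (w - z) / ((c * z + d) * (c * w + d)) := by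
  rw [moebiusMap, moebiusMap, div_sub_div _ _ hw hz]
  ring

theorem moebiusMap_eventually_eq_of_jet {z v₀ v₁ v₂ : ℂ} (hdet : a * d - b * c ≠ 0)
    (hz : c * z + d ≠ 0) (h₀ : moebiusMap a b c d z = v₀)
    (h₁ : deriv (moebiusMap a b c d) z = v₁) (h₂ : deriv (deriv (moebiusMap a b c d)) z = v₂) :
    ∀ᶠ w in 𝓝 z, moebiusMap a b c d w = v₀ + v₁ * (w - z) / (1 - v₂ / (2 * v₁) * (w - z)) := by
  filter_upwards [eventually_linear_ne_zero c d hz] with w hw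
  rw [← h₀, ← h₁, ← h₂, deriv_moebiusMap a b c d hz, deriv_deriv_moebiusMap a b c d hz,
    ← sub_eq_iff_eq_add', moebiusMap_sub_moebiusMap a b c d hz hw]
  generalize a * d - b * c = D at hdet ⊢
  have hjet : 1 - -2 * c * D / (c * z + d) ^ 3 / (2 * (D / (c * z + d) ^ 2)) * (w - z) =
      (c * w + d) / (c * z + d) := by
    field_simp
    ring
  rw [hjet]
  field_simp

end

theorem exists_moebiusMap_jet (z v₀ v₁ v₂ : ℂ) (hv₁ : v₁ ≠ 0) :
    ∃ a b c d : ℂ, a * d - b * c = 1 ∧ c * z + d ≠ 0 ∧ moebiusMap a b c d z = v₀ ∧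
      deriv (moebiusMap a b c d) z = v₁ ∧ deriv (deriv (moebiusMap a b c d)) z = v₂ := by
  obtain ⟨q, hq⟩ := IsAlgClosed.exists_pow_nat_eq v₁⁻¹ two_pos
  have hq₀ : q ≠ 0 := by
    rintro rfl
    simp [eq_comm, hv₁] at hq
  set c := -v₂ * q ^ 3 / 2
  set a := v₀ * c + q⁻¹
  have hden : c * z + (q - c * z) = q := by ring
  have hden₀ : c * z + (q - c * z) ≠ 0 := by rwa [hden]
  have hdet : a * (q - c * z) - (v₀ * q - a * z) * c = 1 := by
    simp only [a]
    field_simp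
    ring
  refine ⟨a, v₀ * q - a * z, c, q - c * z, hdet, hden₀, ?_, ?_, ?_⟩
  · unfold moebiusMap
    rw [hden]
    field_simp
    ring
  · rw [deriv_moebiusMap _ _ _ _ hden₀, hdet, hden, hq, one_div, inv_inv]
  · rw [deriv_deriv_moebiusMap _ _ _ _ hden₀, hdet, hden]
    simp only [c]
    field_simp

/-- Existence and uniqueness of the osculating Möbius transformation: given `z₀` and jet data
`v₀, v₁, v₂` with `v₁ ≠ 0`, there is a Möbius transformation `M(w) = (aw+b)/(cw+d)` with
`ad − bc = 1` and `cz₀ + d ≠ 0` such that `M(z₀) = v₀`, `M'(z₀) = v₁`, `M''(z₀) = v₂`, and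
any two Möbius transformations with these data agree on a neighborhood of `z₀`. In particular
any holomorphic `φ` with `φ'(z₀) ≠ 0` has a unique osculating Möbius transformation (take
`v₀ = φ(z₀)`, `v₁ = φ'(z₀)`, `v₂ = φ''(z₀)`). -/
theorem osculating_moebius_exists_unique (z₀ v₀ v₁ v₂ : ℂ) (hv₁ : v₁ ≠ 0) :
    (∃ a b c d : ℂ, a * d - b * c = 1 ∧ c * z₀ + d ≠ 0 ∧
      (fun w => (a * w + b) / (c * w + d)) z₀ = v₀ ∧
      deriv (fun w => (a * w + b) / (c * w + d)) z₀ = v₁ ∧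
      deriv (deriv (fun w => (a * w + b) / (c * w + d))) z₀ = v₂) ∧
    (∀ a b c d a' b' c' d' : ℂ,
      a * d - b * c = 1 → c * z₀ + d ≠ 0 →
      a' * d' - b' * c' = 1 → c' * z₀ + d' ≠ 0 →
      (fun w => (a * w + b) / (c * w + d)) z₀ = v₀ →
      deriv (fun w => (a * w + b) / (c * w + d)) z₀ = v₁ →
      deriv (deriv (fun w => (a * w + b) / (c * w + d))) z₀ = v₂ →
      (fun w => (a' * w + b') / (c' * w + d')) z₀ = v₀ →
      deriv (fun w => (a' * w + b') / (c' * w + d')) z₀ = v₁ →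
      deriv (deriv (fun w => (a' * w + b') / (c' * w + d'))) z₀ = v₂ →
      ∀ᶠ w in nhds z₀,
        (a * w + b) / (c * w + d) = (a' * w + b') / (c' * w + d')) := by
  refine ⟨exists_moebiusMap_jet z₀ v₀ v₁ v₂ hv₁, ?_⟩
  intro a b c d a' b' c' d' hdet hz hdet' hz' h₀ h₁ h₂ h₀' h₁' h₂'
  filter_upwards [moebiusMap_eventually_eq_of_jet a b c d (hdet ▸ one_ne_zero) hz h₀ h₁ h₂,
    moebiusMap_eventually_eq_of_jet a' b' c' d' (hdet' ▸ one_ne_zero) hz' h₀' h₁' h₂'] with w h h'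
  exact h.trans h'.symm
end
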